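/- For the generalized von Koch function F^λ with λ ∈ (1/6, 5/6), the de Rham-type functional equations hold: F^λ(1−x) = F^λ(x) and F^λ(x/3) = F^λ(x)/3 for all x ∈ [0,1], where F^λ is defined as the increasing pointwise limit of the piecewise affine approximations F_n^λ obtained by iterating the operation Ω^λ starting from the zero function. -/

import Mathlib

/-- The normalized tent profile of the bump added by the operation `Ω^λ`:
zero on `[0,1/3]` and `[2/3,1]`, affine with slopes `±6` in between, peak `1` at `1/2`. -/
noncomputable def kochTent (t : ℝ) : ℝ :=
  max 0 (min (6 * (t - 1/3)) (6 * (2/3 - t)))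

/-- Data `(c, ℓ, m)` of an interval of affinity of the approximations:
left endpoint, length, slope.  `kochChild` describes the four subintervals
(with their slopes) produced by the operation `Ω^λ` on an interval with data `(c, ℓ, m)`. -/
noncomputable def kochChild (lam : ℝ) (i : Fin 4) (p : ℝ × ℝ × ℝ) : ℝ × ℝ × ℝ :=
  let c := p.1; let l := p.2.1; let m := p.2.2
  if i = 0 then (c, l / 3, m)
  else if i = 1 then (c + l / 3, l / 6, m + 6 * lam * Real.sqrt (1 + m ^ 2))
  else if i = 2 then (c + l / 2, l / 6, m - 6 * lam * Real.sqrt (1 + m ^ 2))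
  else (c + 2 * l / 3, l / 3, m)

/-- The interval of affinity (and slope) indexed by a word on the alphabet `{0,1,2,3}`,
starting from `[0,1]` with slope `0`. -/
noncomputable def kochCell (lam : ℝ) : List (Fin 4) → ℝ × ℝ × ℝ
  | [] => (0, 1, 0)
  | i :: w => kochChild lam i (kochCell lam w)

/-- The vertical bump of height `λ·ℓ·√(1+m²)` erected over the middle part of the
interval with data `(c, ℓ, m)`: this is `F_{n+1}^λ - F_n^λ` on this interval. -/
noncomputable def kochBump (lam : ℝ) (p : ℝ × ℝ × ℝ) (x : ℝ) : ℝ :=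
  lam * p.2.1 * Real.sqrt (1 + p.2.2 ^ 2) * kochTent ((x - p.1) / p.2.1)

/-- The `n`-th piecewise affine approximation `F_n^λ` of the generalized von Koch function,
obtained from `F_0^λ ≡ 0` by iterating the operation `Ω^λ`. -/
noncomputable def kochApprox (lam : ℝ) (n : ℕ) (x : ℝ) : ℝ :=
  ∑ k ∈ Finset.range n, ∑ w : Fin k → Fin 4, kochBump lam (kochCell lam (List.ofFn w)) x

/-!
Both equations already hold for every approximation, so they pass to the pointwise limit.
The reflection `x ↦ 1 - x` maps the cell of a word to the cell of its mirror word
(letters `i ↦ 3 - i`) with the opposite slope, and tents are symmetric, so `F_n^λ(1 - x) = F_n^λ(x)`.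
For `x ∈ [0,1]`, the point `x/3` lies in the left third of `[0,1]` and to the left of every
cell not contained in `[0,1/3]`, where bumps vanish; the cells inside `[0,1/3]` are the cells of
the shorter words shrunk by `1/3`, hence `F_{n+1}^λ(x/3) = F_n^λ(x)/3`.
-/

open Finset

noncomputable def kochLevel (lam : ℝ) (k : ℕ) (x : ℝ) : ℝ :=
  ∑ w : Fin k → Fin 4, kochBump lam (kochCell lam (List.ofFn w)) x

def kochReflect (p : ℝ × ℝ × ℝ) : ℝ × ℝ × ℝ := (1 - p.1 - p.2.1, p.2.1, -p.2.2)

noncomputable def kochShrink (p : ℝ × ℝ × ℝ) : ℝ × ℝ × ℝ := (p.1 / 3, p.2.1 / 3, p.2.2)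

lemma kochTent_one_sub (t : ℝ) : kochTent (1 - t) = kochTent t := by
  unfold kochTent
  rw [min_comm]
  ring_nf

lemma kochTent_eq_zero_of_le {t : ℝ} (ht : t ≤ 1 / 3) : kochTent t = 0 :=
  max_eq_left (le_trans (min_le_left _ _) (by linarith))

section Cells

variable (lam : ℝ)

lemma kochChild_length_nonneg (i : Fin 4) {p : ℝ × ℝ × ℝ} (hp : 0 ≤ p.2.1) :
    0 ≤ (kochChild lam i p).2.1 := by
  fin_cases i <;> simp [kochChild] <;> linarith

lemma le_kochChild_fst (i : Fin 4) {p : ℝ × ℝ × ℝ} (hp : 0 ≤ p.2.1) :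
    p.1 ≤ (kochChild lam i p).1 := by
  fin_cases i <;> simp [kochChild] <;> linarith

lemma kochChild_rev (i : Fin 4) (p : ℝ × ℝ × ℝ) :
    kochChild lam i.rev (kochReflect p) = kochReflect (kochChild lam i p) := by
  fin_cases i <;> simp [kochChild, kochReflect, Prod.ext_iff] <;> ring_nf <;> simp

lemma kochChild_shrink (i : Fin 4) (p : ℝ × ℝ × ℝ) :
    kochChild lam i (kochShrink p) = kochShrink (kochChild lam i p) := by
  fin_cases i <;> simp [kochChild, kochShrink, Prod.ext_iff] <;> (try constructor) <;> ring

lemma kochCell_length_nonneg (w : List (Fin 4)) : 0 ≤ (kochCell lam w).2.1 := by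
  induction w with
  | nil => simp [kochCell]
  | cons i w ih => exact kochChild_length_nonneg lam i ih

lemma le_kochCell_append_fst (w v : List (Fin 4)) :
    (kochCell lam v).1 ≤ (kochCell lam (w ++ v)).1 := by
  induction w with
  | nil => rfl
  | cons i w ih =>
    exact ih.trans (le_kochChild_fst lam i (kochCell_length_nonneg lam _))

lemma kochCell_map_rev (w : List (Fin 4)) :
    kochCell lam (w.map Fin.rev) = kochReflect (kochCell lam w) := by
  induction w with
  | nil => simp [kochCell, kochReflect]
  | cons i w ih => simp only [List.map_cons, kochCell, ih, kochChild_rev]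

lemma kochCell_append_zero (w : List (Fin 4)) :
    kochCell lam (w ++ [0]) = kochShrink (kochCell lam w) := by
  induction w with
  | nil => simp [kochCell, kochChild, kochShrink]
  | cons i w ih => simp only [List.cons_append, kochCell, ih, kochChild_shrink]

lemma one_third_le_kochCell_append_fst (w : List (Fin 4)) {i : Fin 4} (hi : i ≠ 0) :
    1 / 3 ≤ (kochCell lam (w ++ [i])).1 := by
  refine le_trans ?_ (le_kochCell_append_fst lam w [i])
  fin_cases i <;> simp_all [kochCell, kochChild] <;> norm_num

end Cells

section Bumps

variable (lam : ℝ) (p : ℝ × ℝ × ℝ)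

lemma kochBump_reflect (x : ℝ) : kochBump lam (kochReflect p) x = kochBump lam p (1 - x) := by
  rcases eq_or_ne p.2.1 0 with hl | hl
  · simp [kochBump, kochReflect, hl]
  · simp only [kochBump, kochReflect, neg_sq]
    rw [← kochTent_one_sub]
    congr 2
    field_simp
    ring

lemma kochBump_shrink (x : ℝ) : kochBump lam (kochShrink p) (x / 3) = kochBump lam p x / 3 := by
  have harg : (x / 3 - p.1 / 3) / (p.2.1 / 3) = (x - p.1) / p.2.1 := by
    rw [← sub_div, div_div_div_cancel_right₀ three_ne_zero]
  simp only [kochBump, kochShrink, harg]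
  ring

lemma kochBump_eq_zero_of_le (hl : 0 ≤ p.2.1) {x : ℝ} (hx : x ≤ p.1 + p.2.1 / 3) :
    kochBump lam p x = 0 := by
  rcases hl.eq_or_lt with hl | hl
  · simp [kochBump, ← hl]
  · rw [kochBump, kochTent_eq_zero_of_le, mul_zero]
    rw [div_le_iff₀ hl]
    linarith

end Bumps

section Levels

variable (lam : ℝ)

lemma kochApprox_eq_sum_kochLevel (n : ℕ) (x : ℝ) :
    kochApprox lam n x = ∑ k ∈ range n, kochLevel lam k x := rfl

lemma kochLevel_one_sub (k : ℕ) (x : ℝ) : kochLevel lam k (1 - x) = kochLevel lam k x := by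
  have hrev : Function.Involutive (fun w : Fin k → Fin 4 => Fin.rev ∘ w) :=
    fun w => funext fun j => Fin.rev_rev (w j)
  refine Fintype.sum_bijective _ hrev.bijective _ _ fun w => ?_
  rw [← List.map_ofFn, kochCell_map_rev, kochBump_reflect]

/-- The last letter of a word is its first subdivision step. -/
lemma kochLevel_succ (k : ℕ) (x : ℝ) :
    kochLevel lam (k + 1) x =
      ∑ i : Fin 4, ∑ v : Fin k → Fin 4, kochBump lam (kochCell lam (List.ofFn v ++ [i])) x := by
  rw [kochLevel, ← (Fin.snocEquiv fun _ => Fin 4).sum_comp, Fintype.sum_prod_type]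
  refine sum_congr rfl fun i _ => sum_congr rfl fun v _ => ?_
  change kochBump lam (kochCell lam (List.ofFn (Fin.snoc v i))) x = _
  rw [List.ofFn_succ']
  simp [List.concat_eq_append]

lemma kochLevel_zero_div_three {x : ℝ} (hx : x ≤ 1) : kochLevel lam 0 (x / 3) = 0 := by
  simp only [kochLevel, Finset.univ_unique, List.ofFn_zero, sum_singleton]
  exact kochBump_eq_zero_of_le lam _ (by simp [kochCell]) (by simp [kochCell]; linarith)

lemma kochLevel_succ_div_three (k : ℕ) {x : ℝ} (hx : x ≤ 1) :
    kochLevel lam (k + 1) (x / 3) = kochLevel lam k x / 3 := by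
  have hvanish : ∀ i : Fin 4, i ≠ 0 → ∀ v : Fin k → Fin 4,
      kochBump lam (kochCell lam (List.ofFn v ++ [i])) (x / 3) = 0 := fun i hi v =>
    kochBump_eq_zero_of_le lam _ (kochCell_length_nonneg lam _) <| by
      linarith [one_third_le_kochCell_append_fst lam (List.ofFn v) hi,
        kochCell_length_nonneg lam (List.ofFn v ++ [i])]
  rw [kochLevel_succ, Fin.sum_univ_four, sum_eq_zero fun v _ => hvanish 1 (by decide) v,
    sum_eq_zero fun v _ => hvanish 2 (by decide) v, sum_eq_zero fun v _ => hvanish 3 (by decide) v]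
  simp only [kochCell_append_zero, kochBump_shrink, add_zero, kochLevel, sum_div]

lemma kochApprox_one_sub (n : ℕ) (x : ℝ) : kochApprox lam n (1 - x) = kochApprox lam n x := by
  simp only [kochApprox_eq_sum_kochLevel, kochLevel_one_sub]

lemma kochApprox_succ_div_three (n : ℕ) {x : ℝ} (hx : x ≤ 1) :
    kochApprox lam (n + 1) (x / 3) = kochApprox lam n x / 3 := by
  simp only [kochApprox_eq_sum_kochLevel, sum_range_succ', kochLevel_zero_div_three lam hx,
    kochLevel_succ_div_three lam _ hx, add_zero, sum_div]

end Levels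

theorem koch_deRham_equations_general (lam : ℝ)
    (F : ℝ → ℝ)
    (hF : ∀ x ∈ Set.Icc (0 : ℝ) 1,
      Filter.Tendsto (fun n => kochApprox lam n x) Filter.atTop (nhds (F x))) :
    ∀ x ∈ Set.Icc (0 : ℝ) 1, F (1 - x) = F x ∧ F (x / 3) = F x / 3 := by
  intro x hx
  have hx' : 1 - x ∈ Set.Icc (0 : ℝ) 1 := ⟨by linarith [hx.2], by linarith [hx.1]⟩
  have hx3 : x / 3 ∈ Set.Icc (0 : ℝ) 1 := ⟨by linarith [hx.1], by linarith [hx.2]⟩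
  constructor
  · refine tendsto_nhds_unique ?_ (hF x hx)
    simpa only [kochApprox_one_sub] using hF (1 - x) hx'
  · refine tendsto_nhds_unique ?_ ((hF x hx).div_const 3)
    refine ((hF (x / 3) hx3).comp (Filter.tendsto_add_atTop_nat 1)).congr fun n => ?_
    exact kochApprox_succ_div_three lam n hx.2

theorem koch_deRham_equations (lam : ℝ) (hlam : lam ∈ Set.Ioo (1/6 : ℝ) (5/6))
    (F : ℝ → ℝ)
    (hF : ∀ x ∈ Set.Icc (0 : ℝ) 1,
      Filter.Tendsto (fun n => kochApprox lam n x) Filter.atTop (nhds (F x))) :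
    ∀ x ∈ Set.Icc (0 : ℝ) 1, F (1 - x) = F x ∧ F (x / 3) = F x / 3 :=
  koch_deRham_equations_general lam F hF
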